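/- arXiv:1302.0449 — 4 statements merged into one kernel-verified Lean document; each statement's English description precedes it below -/
import Mathlib

section
/- Let A and Q be symmetric n×n real matrices with A𝟙 = Q𝟙 = 0, and suppose A is negative definite when restricted to the subspace 𝟙⊥. If P is a symmetric solution of AᵀP + PA = -Q, then 𝟙 is an eigenvector of P. -/
open Matrix

/-!
Applying the Lyapunov equation to `𝟙` gives `Aᵀ(P𝟙) = 0`, so `P𝟙` lies in the kernel of `A`.
That kernel is the line through `𝟙`: if `A v = 0`, the component of `v` orthogonal to `𝟙` is
also killed by `A`, and negative definiteness on `𝟙⊥` forces it to vanish.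
-/

section

variable {ι : Type*} [Fintype ι]

theorem sub_smul_dotProduct_self_eq_zero (u v : ι → ℝ) :
    (v - (u ⬝ᵥ v / u ⬝ᵥ u) • u) ⬝ᵥ u = 0 := by
  by_cases hu : u = 0
  · simp [hu]
  have huu : u ⬝ᵥ u ≠ 0 := fun h => hu (dotProduct_self_eq_zero.mp h)
  rw [sub_dotProduct, smul_dotProduct, smul_eq_mul, div_mul_cancel₀ _ huu, dotProduct_comm,
    sub_self]

theorem exists_eq_smul_of_mulVec_eq_zero {A : Matrix ι ι ℝ} {u v : ι → ℝ}
    (hAneg : ∀ x : ι → ℝ, x ⬝ᵥ u = 0 → x ≠ 0 → x ⬝ᵥ (A *ᵥ x) < 0)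
    (hAu : A *ᵥ u = 0) (hAv : A *ᵥ v = 0) :
    ∃ c : ℝ, v = c • u := by
  set c := u ⬝ᵥ v / u ⬝ᵥ u
  refine ⟨c, sub_eq_zero.mp ?_⟩
  by_contra hne
  have hker : A *ᵥ (v - c • u) = 0 := by
    rw [mulVec_sub, mulVec_smul, hAv, hAu, smul_zero, sub_zero]
  have hneg := hAneg _ (sub_smul_dotProduct_self_eq_zero u v) hne
  rw [hker, dotProduct_zero] at hneg
  exact lt_irrefl 0 hneg

theorem mulVec_mulVec_eq_zero_of_lyap {A Q P : Matrix ι ι ℝ} {u : ι → ℝ}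
    (hA : A.IsSymm) (hlyap : Aᵀ * P + P * A = -Q) (hAu : A *ᵥ u = 0) (hQu : Q *ᵥ u = 0) :
    A *ᵥ (P *ᵥ u) = 0 := by
  have h := congrArg (· *ᵥ u) hlyap
  simp only [add_mulVec, neg_mulVec, ← mulVec_mulVec, hAu, hQu, mulVec_zero, add_zero,
    neg_zero] at h
  rwa [hA.eq] at h

end

theorem ones_eigenvector_of_lyap_general {n : ℕ}
    (A Q P : Matrix (Fin n) (Fin n) ℝ)
    (hA : A.IsSymm)
    (hA1 : A.mulVec (fun _ => (1:ℝ)) = 0)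
    (hQ1 : Q.mulVec (fun _ => (1:ℝ)) = 0)
    (hAneg : ∀ x : Fin n → ℝ, dotProduct x (fun _ => (1:ℝ)) = 0 → x ≠ 0 →
      dotProduct x (A.mulVec x) < 0)
    (hlyap : Aᵀ * P + P * A = -Q) :
    ∃ μ : ℝ, P.mulVec (fun _ => (1:ℝ)) = μ • (fun _ => (1:ℝ)) :=
  exists_eq_smul_of_mulVec_eq_zero hAneg hA1 (mulVec_mulVec_eq_zero_of_lyap hA hlyap hA1 hQ1)

/-- If `A, Q` are symmetric, `A𝟙 = Q𝟙 = 0`, `A` is negative definite on `𝟙⊥`,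
and `P` is a symmetric solution of `AᵀP + PA = -Q`, then `𝟙` is an eigenvector of `P`. -/
theorem ones_eigenvector_of_lyap {n : ℕ} (hn : 0 < n)
    (A Q P : Matrix (Fin n) (Fin n) ℝ)
    (hA : A.IsSymm) (hQ : Q.IsSymm)
    (hA1 : A.mulVec (fun _ => (1:ℝ)) = 0)
    (hQ1 : Q.mulVec (fun _ => (1:ℝ)) = 0)
    (hAneg : ∀ x : Fin n → ℝ, dotProduct x (fun _ => (1:ℝ)) = 0 → x ≠ 0 →
      dotProduct x (A.mulVec x) < 0)
    (hP : P.IsSymm) (hlyap : Aᵀ * P + P * A = -Q) :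
    ∃ μ : ℝ, P.mulVec (fun _ => (1:ℝ)) = μ • (fun _ => (1:ℝ)) :=
  ones_eigenvector_of_lyap_general A Q P hA hA1 hQ1 hAneg hlyap
end

section
/- Let A and Q be symmetric n×n real matrices with A𝟙 = Q𝟙 = 0 and A negative definite on 𝟙⊥, and Q positive semidefinite on 𝟙⊥. Among all positive semidefinite symmetric solutions P of AᵀP + PA = -Q, the one with minimal trace satisfies P𝟙 = 0. -/
/-!
Let `C = I - 𝟙𝟙ᵀ/n` be the orthogonal projection onto `𝟙⊥`. Since `A` and `Q` kill `𝟙` on both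
sides, `C` absorbs them, so conjugating a Lyapunov solution `P` by `C` gives another positive
semidefinite solution `CPC`, and its trace is `tr P - 𝟙ᵀP𝟙/n`. Minimality of `tr P` forces
`𝟙ᵀP𝟙 ≤ 0`, hence `𝟙ᵀP𝟙 = 0`, and for a positive semidefinite `P` this means `P𝟙 = 0`.
-/

open Matrix

namespace Matrix

section Centering

variable (R ι : Type*) [Field R] [Fintype ι] [DecidableEq ι]

def centering : Matrix ι ι R :=
  1 - (Fintype.card ι : R)⁻¹ • vecMulVec 1 1

variable {R ι}

theorem centering_transpose : (centering R ι)ᵀ = centering R ι := by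
  rw [centering, transpose_sub, transpose_one, transpose_smul, transpose_vecMulVec]

theorem mul_centering {m : Type*} {B : Matrix m ι R} (hB : B *ᵥ 1 = 0) :
    B * centering R ι = B := by
  rw [centering, Matrix.mul_sub, Matrix.mul_one, Matrix.mul_smul, mul_vecMulVec, hB,
    zero_vecMulVec, smul_zero, sub_zero]

theorem centering_mul {m : Type*} {B : Matrix ι m R} (hB : 1 ᵥ* B = 0) :
    centering R ι * B = B := by
  rw [centering, Matrix.sub_mul, Matrix.one_mul, Matrix.smul_mul, vecMulVec_mul, hB]
  simp

theorem IsSymm.centering_mul {B : Matrix ι ι R} (hB : B.IsSymm) (h : B *ᵥ 1 = 0) :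
    centering R ι * B = B :=
  Matrix.centering_mul (by rwa [← mulVec_transpose, hB.eq])

/-- Idempotence needs no assumption on the characteristic: if `n = 0` in `R` then `n⁻¹ = 0`. -/
theorem centering_mul_centering : centering R ι * centering R ι = centering R ι := by
  have hc : (Fintype.card ι : R)⁻¹ * (Fintype.card ι : R)⁻¹ * Fintype.card ι =
      (Fintype.card ι : R)⁻¹ := by
    rcases eq_or_ne (Fintype.card ι : R) 0 with h | h
    · simp [h]
    · rw [mul_assoc, inv_mul_cancel₀ h, mul_one]
  rw [centering, Matrix.mul_sub, Matrix.sub_mul, Matrix.sub_mul, Matrix.mul_one, Matrix.one_mul,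
    Matrix.mul_one, Matrix.smul_mul, Matrix.mul_smul, vecMulVec_mul_vecMulVec,
    one_dotProduct_one, vecMulVec_smul, smul_smul, smul_smul, hc]
  abel

theorem trace_centering_mul_mul_centering (P : Matrix ι ι R) :
    trace (centering R ι * P * centering R ι) =
      trace P - (Fintype.card ι : R)⁻¹ * (1 ⬝ᵥ P *ᵥ 1) := by
  rw [trace_mul_cycle, centering_mul_centering, centering, Matrix.sub_mul, Matrix.one_mul,
    trace_sub, Matrix.smul_mul, trace_smul, vecMulVec_mul, trace_vecMulVec, smul_eq_mul,
    dotProduct_mulVec, dotProduct_comm]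

end Centering

theorem transpose_mul_conj_add_conj_mul {R m : Type*} [CommSemiring R] [Fintype m]
    {A M : Matrix m m R} (P : Matrix m m R) (hM : Mᵀ = M) (hAM : A * M = A) (hMA : M * A = A) :
    Aᵀ * (M * P * M) + M * P * M * A = M * (Aᵀ * P + P * A) * M := by
  have hAtM : Aᵀ * M = Aᵀ := by rw [← hM, ← transpose_mul, hMA]
  have hMAt : M * Aᵀ = Aᵀ := by rw [← hM, ← transpose_mul, hAM]
  simp only [Matrix.mul_add, Matrix.add_mul, ← Matrix.mul_assoc, hAtM, hMAt]
  simp only [Matrix.mul_assoc, hMA, hAM]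

theorem PosSemidef.mulVec_one_eq_zero_of_trace_le {ι : Type*} [Fintype ι] [DecidableEq ι]
    [Nonempty ι] {P : Matrix ι ι ℝ} (hP : P.PosSemidef)
    (h : P.trace ≤ (centering ℝ ι * P * centering ℝ ι).trace) : P *ᵥ 1 = 0 := by
  rw [trace_centering_mul_mul_centering, le_sub_self_iff] at h
  have hs : 0 ≤ 1 ⬝ᵥ P *ᵥ 1 := by simpa using hP.dotProduct_mulVec_nonneg 1
  have hs' : 1 ⬝ᵥ P *ᵥ 1 ≤ 0 := nonpos_of_mul_nonpos_right h (by positivity)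
  simpa using (hP.dotProduct_mulVec_zero_iff 1).mp (le_antisymm hs' hs)

end Matrix

theorem min_trace_lyap_solution_kills_ones_general {n : ℕ}
    (A Q P : Matrix (Fin n) (Fin n) ℝ)
    (hA : A.IsSymm) (hQ : Q.IsSymm)
    (hA1 : A.mulVec (fun _ => (1:ℝ)) = 0)
    (hQ1 : Q.mulVec (fun _ => (1:ℝ)) = 0)
    (hPpsd : P.PosSemidef) (hlyap : Aᵀ * P + P * A = -Q)
    (hmin : ∀ P' : Matrix (Fin n) (Fin n) ℝ, P'.PosSemidef →
      Aᵀ * P' + P' * A = -Q → P.trace ≤ P'.trace) :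
    P.mulVec (fun _ => (1:ℝ)) = 0 := by
  cases isEmpty_or_nonempty (Fin n)
  · exact Subsingleton.elim _ _
  have hAC : A * centering ℝ (Fin n) = A := mul_centering hA1
  have hCA : centering ℝ (Fin n) * A = A := hA.centering_mul hA1
  have hQC : Q * centering ℝ (Fin n) = Q := mul_centering hQ1
  have hCQ : centering ℝ (Fin n) * Q = Q := hQ.centering_mul hQ1
  apply hPpsd.mulVec_one_eq_zero_of_trace_le
  refine hmin _ ?_ ?_
  · simpa [conjTranspose_eq_transpose_of_trivial, centering_transpose] using
      hPpsd.mul_mul_conjTranspose_same (centering ℝ (Fin n))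
  · rw [transpose_mul_conj_add_conj_mul P centering_transpose hAC hCA, hlyap, Matrix.mul_neg,
      Matrix.neg_mul, hCQ, hQC]

/-- Among all positive semidefinite symmetric solutions `P` of `AᵀP + PA = -Q`,
the one with minimal trace satisfies `P𝟙 = 0`. -/
theorem min_trace_lyap_solution_kills_ones {n : ℕ}
    (A Q P : Matrix (Fin n) (Fin n) ℝ)
    (hA : A.IsSymm) (hQ : Q.IsSymm)
    (hA1 : A.mulVec (fun _ => (1:ℝ)) = 0)
    (hQ1 : Q.mulVec (fun _ => (1:ℝ)) = 0)
    (hAneg : ∀ x : Fin n → ℝ, dotProduct x (fun _ => (1:ℝ)) = 0 → x ≠ 0 →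
      dotProduct x (A.mulVec x) < 0)
    (hQpsd : ∀ x : Fin n → ℝ, dotProduct x (fun _ => (1:ℝ)) = 0 →
      0 ≤ dotProduct x (Q.mulVec x))
    (hPpsd : P.PosSemidef) (hlyap : Aᵀ * P + P * A = -Q)
    (hmin : ∀ P' : Matrix (Fin n) (Fin n) ℝ, P'.PosSemidef →
      Aᵀ * P' + P' * A = -Q → P.trace ≤ P'.trace) :
    P.mulVec (fun _ => (1:ℝ)) = 0 :=
  min_trace_lyap_solution_kills_ones_general A Q P hA hQ hA1 hQ1 hPpsd hlyap hmin
end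

section
/- Let A and Q be symmetric n×n real matrices with A𝟙 = Q𝟙 = 0 and A negative definite on 𝟙⊥. Any symmetric solution P of AᵀP + PA = -Q can be written as P = (p/n)𝟙𝟙ᵀ + P⊥ for some real p and a matrix P⊥ with P⊥𝟙 = 0, and trace(P) = p - (1/2)·trace(Q A†), where A† is the Moore–Penrose pseudoinverse of A. -/
/-!
Negative definiteness on `𝟙⊥` together with `A𝟙 = 0` forces `ker A = span 𝟙`. Applying the
Lyapunov equation to `𝟙` puts `P𝟙` in `ker A`, so `P𝟙 = p𝟙`, which gives the decomposition.
Both `1 - AA†` and `1 - A†A` are killed by `A` on the left and fix `𝟙`, so each has the form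
`𝟙cᵀ` with `cᵀ𝟙 = 1`, whence `tr (P (1 - AA†)) = tr (P (1 - A†A)) = cᵀP𝟙 = p`. Multiplying the
Lyapunov equation by `A†` and taking traces, cyclicity turns it into `2 (tr P - p) = -tr (QA†)`.
-/

open Matrix

namespace Matrix

variable {ι κ R : Type*} [Fintype ι]

theorem exists_eq_smul_one_of_mulVec_eq_zero [Field R] [LinearOrder R] [IsStrictOrderedRing R]
    [Nonempty ι] {A : Matrix ι ι R} (hA1 : A *ᵥ 1 = 0)
    (hneg : ∀ x : ι → R, x ⬝ᵥ 1 = 0 → x ≠ 0 → x ⬝ᵥ A *ᵥ x < 0)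
    {x : ι → R} (hx : A *ᵥ x = 0) : ∃ c : R, x = c • 1 := by
  set c : R := (∑ i, x i) / Fintype.card ι
  refine ⟨c, by_contra fun hne => ?_⟩
  have hcard : (Fintype.card ι : R) ≠ 0 := Nat.cast_ne_zero.mpr Fintype.card_ne_zero
  have horth : (x - c • 1) ⬝ᵥ 1 = 0 := by
    simp [dotProduct_one, c, mul_div_cancel₀ _ hcard]
  have hker : A *ᵥ (x - c • 1) = 0 := by
    rw [mulVec_sub, mulVec_smul, hx, hA1, smul_zero, sub_zero]
  simpa [hker] using hneg _ horth (sub_ne_zero.mpr hne)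

theorem exists_eq_vecMulVec_one_of_mul_eq_zero [CommRing R] {A : Matrix ι ι R}
    (hker : ∀ x : ι → R, A *ᵥ x = 0 → ∃ c : R, x = c • 1)
    {E : Matrix ι κ R} (hE : A * E = 0) : ∃ c : κ → R, E = vecMulVec 1 c := by
  have hcol (j : κ) : ∃ c : R, Eᵀ j = c • 1 :=
    hker _ (by ext i; simpa [mul_apply, mulVec, dotProduct] using congrFun (congrFun hE i) j)
  choose c hc using hcol
  exact ⟨c, by ext i j; simpa [vecMulVec_apply] using congrFun (hc j) i⟩

theorem trace_mul_eq_of_mulVec_one_eq_smul [CommRing R] [Nonempty ι] {A P E : Matrix ι ι R}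
    (hker : ∀ x : ι → R, A *ᵥ x = 0 → ∃ c : R, x = c • 1)
    {p : R} (hP : P *ᵥ 1 = p • 1) (hE : A * E = 0) (hE1 : E *ᵥ 1 = 1) :
    (P * E).trace = p := by
  obtain ⟨c, rfl⟩ := exists_eq_vecMulVec_one_of_mul_eq_zero hker hE
  have hc : c ⬝ᵥ 1 = 1 := by
    obtain ⟨i⟩ := ‹Nonempty ι›
    rw [vecMulVec_mulVec] at hE1
    simpa using congrFun hE1 i
  rw [mul_vecMulVec, trace_vecMulVec, hP, smul_dotProduct, dotProduct_comm, hc, smul_eq_mul,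
    mul_one]

theorem of_one_mulVec_one [CommRing R] :
    (of fun _ _ => 1 : Matrix ι ι R) *ᵥ 1 = (Fintype.card ι : R) • 1 := by
  ext; simp [mulVec, dotProduct]

theorem IsSymm.mul_mul_eq_self_of_mul_mul_eq_self [CommRing R] {A B : Matrix ι ι R}
    (hA : A.IsSymm) (hAB : (A * B).IsSymm) (h : A * B * A = A) : A * (A * B) = A :=
  calc A * (A * B) = (A * B * A)ᵀ := by rw [transpose_mul, hAB.eq, hA.eq]
    _ = A := by rw [h, hA.eq]

end Matrix

theorem lyap_trace_via_pinv_general {n : ℕ} (hn : 0 < n)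
    (A Q P Adag : Matrix (Fin n) (Fin n) ℝ)
    (hA : A.IsSymm)
    (hA1 : A.mulVec (fun _ => (1:ℝ)) = 0)
    (hQ1 : Q.mulVec (fun _ => (1:ℝ)) = 0)
    (hAneg : ∀ x : Fin n → ℝ, dotProduct x (fun _ => (1:ℝ)) = 0 → x ≠ 0 →
      dotProduct x (A.mulVec x) < 0)
    (hlyap : Aᵀ * P + P * A = -Q)
    (hpen1 : A * Adag * A = A)
    (hpen3 : (A * Adag).IsSymm) :
    ∃ (p : ℝ) (Pperp : Matrix (Fin n) (Fin n) ℝ),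
      P = (p / n) • Matrix.of (fun _ _ => (1:ℝ)) + Pperp ∧
      Pperp.mulVec (fun _ => (1:ℝ)) = 0 ∧
      P.trace = p - (1/2) * (Q * Adag).trace := by
  have : Nonempty (Fin n) := ⟨⟨0, hn⟩⟩
  replace hA1 : A *ᵥ 1 = 0 := hA1
  replace hQ1 : Q *ᵥ 1 = 0 := hQ1
  have hker (x : Fin n → ℝ) (hx : A *ᵥ x = 0) : ∃ c : ℝ, x = c • 1 :=
    exists_eq_smul_one_of_mulVec_eq_zero hA1 hAneg hx
  obtain ⟨p, hp⟩ : ∃ p : ℝ, P *ᵥ 1 = p • 1 := hker _ <| by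
    simpa [add_mulVec, neg_mulVec, ← mulVec_mulVec, hA.eq, hA1, hQ1] using
      congrArg (· *ᵥ 1) hlyap
  refine ⟨p, P - (p / n) • of fun _ _ => 1, by abel, ?_, ?_⟩
  · change (_ : Matrix _ _ ℝ) *ᵥ 1 = 0
    rw [sub_mulVec, smul_mulVec, of_one_mulVec_one, Fintype.card_fin, hp, smul_smul,
      div_mul_cancel₀ _ (by positivity), sub_self]
  have hleft : (P * (1 - A * Adag)).trace = p :=
    trace_mul_eq_of_mulVec_one_eq_smul hker hp
      (by rw [mul_sub, mul_one, hA.mul_mul_eq_self_of_mul_mul_eq_self hpen3 hpen1, sub_self])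
      (by rw [sub_mulVec, ← hpen3.eq, transpose_mul, hA.eq, ← mulVec_mulVec, hA1, mulVec_zero,
        one_mulVec, sub_zero])
  have hright : (P * (1 - Adag * A)).trace = p :=
    trace_mul_eq_of_mulVec_one_eq_smul hker hp
      (by rw [mul_sub, mul_one, ← mul_assoc, hpen1, sub_self])
      (by rw [sub_mulVec, ← mulVec_mulVec, hA1, mulVec_zero, one_mulVec, sub_zero])
  have hlyap_tr : (P * (Adag * A)).trace + (P * (A * Adag)).trace = -(Q * Adag).trace := by
    have h := congrArg (fun M => (M * Adag).trace) hlyap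
    simp only [hA.eq, add_mul, neg_mul, trace_add, trace_neg] at h
    rwa [mul_assoc, trace_mul_comm, mul_assoc, mul_assoc] at h
  rw [mul_sub, mul_one, trace_sub] at hleft hright
  linarith

/-- Any symmetric solution `P` of `AᵀP + PA = -Q` decomposes as
`P = (p/n)𝟙𝟙ᵀ + P⊥` with `P⊥𝟙 = 0`, and `trace P = p - (1/2)·trace(Q A†)`,
where `A†` is the Moore–Penrose pseudoinverse of `A` (characterized by the
four Penrose conditions). -/
theorem lyap_trace_via_pinv {n : ℕ} (hn : 0 < n)
    (A Q P Adag : Matrix (Fin n) (Fin n) ℝ)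
    (hA : A.IsSymm) (hQ : Q.IsSymm)
    (hA1 : A.mulVec (fun _ => (1:ℝ)) = 0)
    (hQ1 : Q.mulVec (fun _ => (1:ℝ)) = 0)
    (hAneg : ∀ x : Fin n → ℝ, dotProduct x (fun _ => (1:ℝ)) = 0 → x ≠ 0 →
      dotProduct x (A.mulVec x) < 0)
    (hP : P.IsSymm) (hlyap : Aᵀ * P + P * A = -Q)
    (hpen1 : A * Adag * A = A) (hpen2 : Adag * A * Adag = Adag)
    (hpen3 : (A * Adag).IsSymm) (hpen4 : (Adag * A).IsSymm) :
    ∃ (p : ℝ) (Pperp : Matrix (Fin n) (Fin n) ℝ),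
      P = (p / n) • Matrix.of (fun _ _ => (1:ℝ)) + Pperp ∧
      Pperp.mulVec (fun _ => (1:ℝ)) = 0 ∧
      P.trace = p - (1/2) * (Q * Adag).trace :=
  lyap_trace_via_pinv_general hn A Q P Adag hA hA1 hQ1 hAneg hlyap hpen1 hpen3
end

section
/- Let A be a symmetric n×n real matrix with A𝟙 = 0 that is negative definite on 𝟙⊥. Then A - 𝟙𝟙ᵀ/n is invertible and A† = (A - 𝟙𝟙ᵀ/n)⁻¹ + 𝟙𝟙ᵀ/n, where A† is the Moore–Penrose pseudoinverse of A. -/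
/-!
`J = 𝟙𝟙ᵀ/n` is a symmetric idempotent with `A * J = J * A = 0`, since `A𝟙 = 0` and `A` is
symmetric. Then `J * (A - J) = -J`, so a kernel vector `v` of `A - J` has `J v = 0`, i.e.
`v ∈ 𝟙⊥`, and then `A v = 0`, which negative definiteness on `𝟙⊥` rules out unless `v = 0`.
Writing `B = A - J`, one gets `A * (B⁻¹ + J) = (B⁻¹ + J) * A = 1 - J`, so `B⁻¹ + J` satisfies
the four Penrose equations, and the Moore–Penrose inverse is unique.
-/

open Matrix

namespace Matrix

section MoorePenrose

variable {m n R : Type*} [Fintype m] [Fintype n] [CommSemiring R]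

def IsMoorePenroseInverse (A : Matrix m n R) (X : Matrix n m R) : Prop :=
  A * X * A = A ∧ X * A * X = X ∧ (A * X).IsSymm ∧ (X * A).IsSymm

theorem IsMoorePenroseInverse.eq {A : Matrix m n R} {X Y : Matrix n m R}
    (hX : A.IsMoorePenroseInverse X) (hY : A.IsMoorePenroseInverse Y) : X = Y := by
  obtain ⟨hX1, hX2, hX3, hX4⟩ := hX
  obtain ⟨hY1, hY2, hY3, hY4⟩ := hY
  have hAX : A * X = A * Y :=
    calc A * X = (A * Y * (A * X))ᵀ := by rw [← Matrix.mul_assoc, hY1, hX3]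
      _ = A * X * (A * Y) := by rw [transpose_mul, hX3, hY3]
      _ = A * Y := by rw [← Matrix.mul_assoc, hX1]
  have hXA : X * A = Y * A :=
    calc X * A = (X * (A * Y * A))ᵀ := by rw [hY1, hX4]
      _ = Y * A * (X * A) := by
          rw [show X * (A * Y * A) = X * A * (Y * A) by simp only [Matrix.mul_assoc],
            transpose_mul, hX4, hY4]
      _ = Y * A := by rw [Matrix.mul_assoc, ← Matrix.mul_assoc A, hX1]
  calc X = X * A * X := hX2.symm
    _ = Y * A * Y := by rw [hXA, Matrix.mul_assoc, hAX, ← Matrix.mul_assoc]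
    _ = Y := hY2

end MoorePenrose

section ShiftByIdempotent

variable {n : Type*} [Fintype n] [DecidableEq n]

theorem isMoorePenroseInverse_inv_sub_add {R : Type*} [CommRing R] {A J : Matrix n n R}
    (hJ : IsIdempotentElem J) (hJt : J.IsSymm) (hAJ : A * J = 0) (hJA : J * A = 0)
    (hB : IsUnit (A - J)) :
    A.IsMoorePenroseInverse ((A - J)⁻¹ + J) := by
  set B := A - J
  have hA : A = B + J := by simp [B]
  have hBJ : B * J = -J := by simp [B, sub_mul, hAJ, hJ.eq]
  have hJB : J * B = -J := by simp [B, mul_sub, hJA, hJ.eq]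
  have hdet : IsUnit B.det := (isUnit_iff_isUnit_det B).1 hB
  have hBinvJ : B⁻¹ * J = -J :=
    calc B⁻¹ * J = -(B⁻¹ * (B * J)) := by rw [hBJ, mul_neg, neg_neg]
      _ = -J := by rw [← Matrix.mul_assoc, nonsing_inv_mul B hdet, one_mul]
  have hJBinv : J * B⁻¹ = -J :=
    calc J * B⁻¹ = -(J * B * B⁻¹) := by rw [hJB, neg_mul, neg_neg]
      _ = -J := by rw [Matrix.mul_assoc, mul_nonsing_inv B hdet, mul_one]
  have hAC : A * (B⁻¹ + J) = 1 - J := by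
    rw [hA, add_mul, mul_add, mul_add, mul_nonsing_inv B hdet, hBJ, hJBinv, hJ.eq]
    abel
  have hCA : (B⁻¹ + J) * A = 1 - J := by
    rw [hA, add_mul, mul_add, mul_add, nonsing_inv_mul B hdet, hJB, hBinvJ, hJ.eq]
    abel
  have hsymm : (1 - J).IsSymm := by simp [IsSymm, hJt.eq]
  refine ⟨?_, ?_, hAC ▸ hsymm, hCA ▸ hsymm⟩
  · rw [hAC, sub_mul, one_mul, hJA, sub_zero]
  · rw [hCA, sub_mul, one_mul, mul_add, hJBinv, hJ.eq, neg_add_cancel, sub_zero]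

theorem isUnit_sub_of_isIdempotentElem {K : Type*} [Field K] {A J : Matrix n n K}
    (hJ : IsIdempotentElem J) (hJA : J * A = 0)
    (hker : ∀ v, J *ᵥ v = 0 → A *ᵥ v = 0 → v = 0) : IsUnit (A - J) := by
  refine mulVec_injective_iff_isUnit.1 fun v w hvw => sub_eq_zero.1 ?_
  have hv : (A - J) *ᵥ (v - w) = 0 := by rw [mulVec_sub, hvw, sub_self]
  have hJv : J *ᵥ (v - w) = 0 := by
    simpa [mulVec_mulVec, mul_sub, hJA, hJ.eq, neg_mulVec] using congrArg (J *ᵥ ·) hv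
  exact hker _ hJv (by rwa [sub_mulVec, hJv, sub_zero] at hv)

end ShiftByIdempotent

section Averaging

variable {ι m K : Type*} [Fintype ι] [Field K]

variable (ι K) in
def averagingMatrix : Matrix ι ι K := (Fintype.card ι : K)⁻¹ • vecMulVec 1 1

theorem averagingMatrix_isSymm : (averagingMatrix ι K).IsSymm := by
  rw [averagingMatrix, IsSymm, transpose_smul, transpose_vecMulVec]

theorem isIdempotentElem_averagingMatrix [CharZero K] :
    IsIdempotentElem (averagingMatrix ι K) := by
  rcases isEmpty_or_nonempty ι with hι | hι
  · exact Subsingleton.elim _ _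
  · have hcard : (Fintype.card ι : K) ≠ 0 := Nat.cast_ne_zero.2 Fintype.card_ne_zero
    rw [IsIdempotentElem, averagingMatrix, smul_mul_smul_comm, vecMulVec_mul_vecMulVec,
      one_dotProduct_one, vecMulVec_smul, smul_smul]
    congr 1
    field_simp

theorem mul_averagingMatrix_eq_zero {A : Matrix m ι K} (h : A *ᵥ 1 = 0) :
    A * averagingMatrix ι K = 0 := by
  rw [averagingMatrix, Matrix.mul_smul, mul_vecMulVec, h, zero_vecMulVec, smul_zero]

theorem averagingMatrix_mul_eq_zero [Fintype m] {A : Matrix ι m K} (h : 1 ᵥ* A = 0) :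
    averagingMatrix ι K * A = 0 := by
  rw [averagingMatrix, Matrix.smul_mul, vecMulVec_mul, h]
  simp

theorem averagingMatrix_mulVec_eq_zero_iff [CharZero K] {v : ι → K} :
    averagingMatrix ι K *ᵥ v = 0 ↔ v ⬝ᵥ 1 = 0 := by
  rcases isEmpty_or_nonempty ι with hι | hι
  · simp [Subsingleton.elim v 0]
  · rw [averagingMatrix, smul_mulVec, vecMulVec_mulVec]
    simp [dotProduct_comm v]

end Averaging

end Matrix

/-- `A - 𝟙𝟙ᵀ/n` is invertible and `A† = (A - 𝟙𝟙ᵀ/n)⁻¹ + 𝟙𝟙ᵀ/n`, where `A†` is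
the Moore–Penrose pseudoinverse of `A`. -/
theorem pinv_eq_inv_shift {n : ℕ}
    (A Adag : Matrix (Fin n) (Fin n) ℝ)
    (hA : A.IsSymm)
    (hA1 : A.mulVec (fun _ => (1:ℝ)) = 0)
    (hAneg : ∀ x : Fin n → ℝ, dotProduct x (fun _ => (1:ℝ)) = 0 → x ≠ 0 →
      dotProduct x (A.mulVec x) < 0)
    (hpen1 : A * Adag * A = A) (hpen2 : Adag * A * Adag = Adag)
    (hpen3 : (A * Adag).IsSymm) (hpen4 : (Adag * A).IsSymm) :
    IsUnit (A - (n:ℝ)⁻¹ • Matrix.of (fun _ _ => (1:ℝ))) ∧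
    Adag = (A - (n:ℝ)⁻¹ • Matrix.of (fun _ _ => (1:ℝ)))⁻¹ +
      (n:ℝ)⁻¹ • Matrix.of (fun _ _ => (1:ℝ)) := by
  have hJ : (n:ℝ)⁻¹ • of (fun _ _ => 1) = averagingMatrix (Fin n) ℝ := by
    ext; simp [averagingMatrix]
  rw [hJ]
  have hAJ := mul_averagingMatrix_eq_zero hA1
  have hJA := averagingMatrix_mul_eq_zero (A := A) (by rw [← hA.eq, vecMul_transpose]; exact hA1)
  have hB : IsUnit (A - averagingMatrix (Fin n) ℝ) :=
    isUnit_sub_of_isIdempotentElem isIdempotentElem_averagingMatrix hJA fun v hJv hAv => by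
      by_contra hv
      simpa [hAv] using hAneg v (averagingMatrix_mulVec_eq_zero_iff.1 hJv) hv
  exact ⟨hB, IsMoorePenroseInverse.eq ⟨hpen1, hpen2, hpen3, hpen4⟩ <|
    isMoorePenroseInverse_inv_sub_add isIdempotentElem_averagingMatrix averagingMatrix_isSymm
      hAJ hJA hB⟩
end
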